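/- Let K ≥ 2, γ₁, γ₂ > 0 with γ₁ − γ₂(1 + (1−K)/K·α) > 0 and α < 0. Setting q = p_y/(p_y + (K−1)p_other) with p_y = γ₁ − γ₂(1 + (1−K)/K·α) and p_other = −γ₂α/K, the induced symmetric label mechanism satisfies ε-Label-LDP with ε = |log( K/α·(1 − γ₁/γ₂) + 1 − K )|. -/

import Mathlib

/-!
The mechanism is randomized response: the true label is kept with probability proportional to
`p_y` and each of the `K - 1` other labels is reported with probability proportional to
`p_other`. Hence any ratio of output probabilities is `1`, `p_y / p_other` or its inverse, all
bounded by `exp |log (p_y / p_other)|`, and `p_y / p_other` simplifies to the paper's expression.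
-/

open Real

lemma le_exp_abs_log {x : ℝ} (hx : 0 < x) : x ≤ exp |log x| :=
  calc x = exp (log x) := (exp_log hx).symm
    _ ≤ exp |log x| := exp_le_exp.mpr (le_abs_self _)

lemma inv_le_exp_abs_log {x : ℝ} (hx : 0 < x) : x⁻¹ ≤ exp |log x| := by
  simpa only [log_inv, abs_neg] using le_exp_abs_log (inv_pos.mpr hx)

lemma symmetric_mechanism_div_le {ι : Type*} [DecidableEq ι] {a b : ℝ} (ha : 0 < a) (hb : 0 < b)
    (M : ι → ι → ℝ) (hM : ∀ y ypred, M y ypred = if ypred = y then a else b)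
    (y y' ypred : ι) : M y ypred / M y' ypred ≤ exp |log (a / b)| := by
  have hone : (1 : ℝ) ≤ exp |log (a / b)| := one_le_exp (abs_nonneg _)
  rw [hM, hM]
  split_ifs
  · rwa [div_self ha.ne']
  · exact le_exp_abs_log (div_pos ha hb)
  · simpa only [inv_div] using inv_le_exp_abs_log (div_pos ha hb)
  · rwa [div_self hb.ne']

lemma one_sub_div_div_pred_eq {K p r : ℝ} (hK : K - 1 ≠ 0) (hS : p + (K - 1) * r ≠ 0) :
    (1 - p / (p + (K - 1) * r)) / (K - 1) = r / (p + (K - 1) * r) := by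
  field_simp
  ring

lemma unlearning_odds_eq {K γ₁ γ₂ α : ℝ} (hK : K ≠ 0) (hγ₂ : γ₂ ≠ 0) (hα : α ≠ 0) :
    (γ₁ - γ₂ * (1 + (1 - K) / K * α)) / (-γ₂ * α / K) = K / α * (1 - γ₁ / γ₂) + 1 - K := by
  field_simp
  ring

theorem unlearning_label_ldp_general (K : ℕ) (hK : 2 ≤ K) (γ₁ γ₂ α : ℝ)
    (hγ₂ : 0 < γ₂) (hα : α < 0)
    (hpos : 0 < γ₁ - γ₂ * (1 + (1 - (K : ℝ)) / K * α))
    (py pother q : ℝ)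
    (hpy : py = γ₁ - γ₂ * (1 + (1 - (K : ℝ)) / K * α))
    (hpother : pother = -γ₂ * α / K)
    (hq : q = py / (py + (K - 1) * pother))
    (M : Fin K → Fin K → ℝ)
    (hM : ∀ y ypred : Fin K, M y ypred = if ypred = y then q else (1 - q) / (K - 1)) :
    ∀ y y' ypred : Fin K,
      M y ypred / M y' ypred
        ≤ Real.exp |Real.log ((K : ℝ) / α * (1 - γ₁ / γ₂) + 1 - K)| := by
  have hK1 : (0 : ℝ) < K - 1 := by
    have : (2 : ℝ) ≤ K := by exact_mod_cast hK
    linarith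
  have hpy_pos : 0 < py := hpy ▸ hpos
  have hpother_pos : 0 < pother := hpother ▸ div_pos (by nlinarith) (by linarith)
  have hS : 0 < py + (K - 1) * pother := by positivity
  have hM' : ∀ y ypred : Fin K, M y ypred = if ypred = y then py / (py + (K - 1) * pother)
      else pother / (py + (K - 1) * pother) := by
    simpa only [hq, one_sub_div_div_pred_eq hK1.ne' hS.ne'] using hM
  rw [← unlearning_odds_eq (by linarith) hγ₂.ne' hα.ne, ← hpy, ← hpother,
    ← div_div_div_cancel_right₀ hS.ne' py pother]
  exact symmetric_mechanism_div_le (div_pos hpy_pos hS) (div_pos hpother_pos hS) M hM'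

theorem unlearning_label_ldp (K : ℕ) (hK : 2 ≤ K) (γ₁ γ₂ α : ℝ)
    (hγ₁ : 0 < γ₁) (hγ₂ : 0 < γ₂) (hα : α < 0)
    (hpos : 0 < γ₁ - γ₂ * (1 + (1 - (K : ℝ)) / K * α))
    (py pother q : ℝ)
    (hpy : py = γ₁ - γ₂ * (1 + (1 - (K : ℝ)) / K * α))
    (hpother : pother = -γ₂ * α / K)
    (hq : q = py / (py + (K - 1) * pother))
    (M : Fin K → Fin K → ℝ)
    (hM : ∀ y ypred : Fin K, M y ypred = if ypred = y then q else (1 - q) / (K - 1)) :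
    ∀ y y' ypred : Fin K,
      M y ypred / M y' ypred
        ≤ Real.exp |Real.log ((K : ℝ) / α * (1 - γ₁ / γ₂) + 1 - K)| :=
  unlearning_label_ldp_general K hK γ₁ γ₂ α hγ₂ hα hpos py pother q hpy hpother hq M hM
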